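/- arXiv:2010.05735 — 7 statements merged into one kernel-verified Lean document; each statement's English description precedes it below -/
import Mathlib

section
/- Let G be a directed graph with disjoint vertex subsets A and B such that |A| = 2k+1, |B| ≥ 2^(4k+4)·k, and every vertex in A has at least (1 - 1/(2k+1))·|B|/2 outneighbours in B. Then A contains a subset A' of size k that has at least (2k+1)·2^(2k) common outneighbours in B. -/
/-- A tournament: irreflexive, and exactly one direction between distinct vertices. -/
def IsTournament {V : Type*} (T : V → V → Prop) : Prop :=
  (∀ v : V, ¬ T v v) ∧ ∀ u v : V, u ≠ v → (T u v ↔ ¬ T v u)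

/-- `T` contains the k-th power of a directed path on `L` vertices. -/
def ContainsPathPower {V : Type*} (T : V → V → Prop) (k L : ℕ) : Prop :=
  ∃ v : Fin L → V, Function.Injective v ∧
    ∀ i j : Fin L, (i : ℕ) < (j : ℕ) → (j : ℕ) ≤ (i : ℕ) + k → T (v i) (v j)

theorem kst_style {V : Type*} [DecidableEq V] (G : V → V → Prop) [DecidableRel G]
    (hirr : ∀ v : V, ¬ G v v) (k : ℕ) (hk : 1 ≤ k) (A B : Finset V)
    (hAB : Disjoint A B) (hA : A.card = 2 * k + 1)
    (hB : 2 ^ (4 * k + 4) * k ≤ B.card)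
    (hdeg : ∀ a ∈ A, (1 - 1 / (2 * k + 1 : ℝ)) * (B.card : ℝ) / 2 ≤
      ((B.filter fun b => G a b).card : ℝ)) :
    ∃ A' ⊆ A, A'.card = k ∧
      (2 * k + 1) * 2 ^ (2 * k) ≤ (B.filter fun b => ∀ a ∈ A', G a b).card := by
  classical
  set d : V → ℕ := fun b => (A.filter fun a => G a b).card with hd
  -- Step 1: sum of in-degrees from A over B is at least k * |B|
  have hsum : k * B.card ≤ ∑ b ∈ B, d b := by
    have hswap : ∑ b ∈ B, d b = ∑ a ∈ A, (B.filter fun b => G a b).card := by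
      simp only [hd, Finset.card_filter]
      rw [Finset.sum_comm]
    rw [hswap]
    have hreal : (↑(k * B.card) : ℝ) ≤ ↑(∑ a ∈ A, (B.filter fun b => G a b).card) := by
      push_cast
      calc (k : ℝ) * B.card
          = A.card * ((1 - 1 / (2 * k + 1 : ℝ)) * (B.card : ℝ) / 2) := by
            rw [hA]
            have h1 : ((2 * k + 1 : ℕ) : ℝ) ≠ 0 := by positivity
            push_cast at h1 ⊢
            field_simp
            ring
        _ = ∑ _a ∈ A, ((1 - 1 / (2 * k + 1 : ℝ)) * (B.card : ℝ) / 2) := by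
            rw [Finset.sum_const, nsmul_eq_mul]
        _ ≤ ∑ a ∈ A, ((B.filter fun b => G a b).card : ℝ) := Finset.sum_le_sum hdeg
    exact_mod_cast hreal
  -- Step 2: pointwise bound  d b + 1 ≤ choose (d b) k + k
  have hpt : ∀ b ∈ B, d b + 1 ≤ Nat.choose (d b) k + k := by
    intro b _
    rcases lt_or_ge (d b) k with h | h
    · have h0 : Nat.choose (d b) k = 0 := Nat.choose_eq_zero_of_lt h
      omega
    · have h1 := Nat.choose_le_choose (d b - k) (show d b - k + 1 ≤ d b by omega)
      rw [Nat.choose_succ_self_right, Nat.choose_symm h] at h1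
      omega
  -- Step 3: |B| ≤ ∑ choose (d b) k
  have hchoose : B.card ≤ ∑ b ∈ B, Nat.choose (d b) k := by
    have h2 := Finset.sum_le_sum hpt
    rw [Finset.sum_add_distrib, Finset.sum_add_distrib, Finset.sum_const,
      Finset.sum_const, smul_eq_mul, smul_eq_mul, mul_one, mul_comm B.card k] at h2
    omega
  -- Step 4: count via k-subsets
  set P := A.powersetCard k with hP
  have hcount : ∑ b ∈ B, Nat.choose (d b) k
      = ∑ A' ∈ P, (B.filter fun b => ∀ a ∈ A', G a b).card := by
    have h3 : ∀ b, Nat.choose (d b) k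
        = (P.filter fun A' => ∀ a ∈ A', G a b).card := by
      intro b
      have : (P.filter fun A' => ∀ a ∈ A', G a b)
          = (A.filter fun a => G a b).powersetCard k := by
        ext A'
        simp only [Finset.mem_filter, Finset.mem_powersetCard, hP, Finset.subset_iff]
        constructor
        · rintro ⟨⟨hsub, hc⟩, hall⟩
          exact ⟨fun x hx => ⟨hsub hx, hall x hx⟩, hc⟩
        · rintro ⟨hsub, hc⟩
          exact ⟨⟨fun x hx => (hsub hx).1, hc⟩, fun x hx => (hsub hx).2⟩
      rw [this, Finset.card_powersetCard]
    simp only [h3, Finset.card_filter]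
    rw [Finset.sum_comm]
  -- Step 5: pigeonhole
  by_contra hcon
  push_neg at hcon
  have hPne : P.Nonempty := Finset.powersetCard_nonempty.2 (by omega)
  have hlt : ∀ A' ∈ P, (B.filter fun b => ∀ a ∈ A', G a b).card
      < (2 * k + 1) * 2 ^ (2 * k) := by
    intro A' hA'
    obtain ⟨hsub, hc⟩ := Finset.mem_powersetCard.1 hA'
    exact hcon A' hsub hc
  have hsumlt : ∑ A' ∈ P, (B.filter fun b => ∀ a ∈ A', G a b).card
      < P.card * ((2 * k + 1) * 2 ^ (2 * k)) := by
    calc ∑ A' ∈ P, (B.filter fun b => ∀ a ∈ A', G a b).card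
        < ∑ _A' ∈ P, (2 * k + 1) * 2 ^ (2 * k) :=
          Finset.sum_lt_sum_of_nonempty hPne hlt
      _ = P.card * ((2 * k + 1) * 2 ^ (2 * k)) := by
          rw [Finset.sum_const, smul_eq_mul]
  have hPcard : P.card ≤ 2 ^ (2 * k + 1) := by
    rw [hP, Finset.card_powersetCard, hA]
    calc Nat.choose (2 * k + 1) k ≤ ∑ i ∈ Finset.range (2 * k + 1 + 1), Nat.choose (2 * k + 1) i :=
          Finset.single_le_sum (fun i _ => Nat.zero_le _) (Finset.mem_range.2 (by omega))
      _ = 2 ^ (2 * k + 1) := Nat.sum_range_choose (2 * k + 1)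
  -- derive contradiction
  have hfinal : P.card * ((2 * k + 1) * 2 ^ (2 * k)) ≤ B.card := by
    calc P.card * ((2 * k + 1) * 2 ^ (2 * k))
        ≤ 2 ^ (2 * k + 1) * ((2 * k + 1) * 2 ^ (2 * k)) :=
          Nat.mul_le_mul_right _ hPcard
      _ ≤ 2 ^ (4 * k + 4) * k := by
          have : 2 ^ (2 * k + 1) * ((2 * k + 1) * 2 ^ (2 * k))
              = (2 * k + 1) * 2 ^ (4 * k + 1) := by
                rw [show 4 * k + 1 = (2 * k + 1) + 2 * k from by ring, pow_add]; ring
          rw [this]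
          calc (2 * k + 1) * 2 ^ (4 * k + 1) ≤ 8 * k * 2 ^ (4 * k + 1) :=
                Nat.mul_le_mul_right _ (by omega)
            _ = 2 ^ (4 * k + 4) * k := by rw [pow_add]; ring
      _ ≤ B.card := hB
  have := hchoose.trans (hcount.le.trans hsumlt.le)
  omega
end

section
/- Every tournament on 2^m vertices contains a transitive subtournament on m+1 vertices. -/
lemma transitive_aux (m : ℕ) {V : Type*} (T : V → V → Prop) (hT : IsTournament T)
    (S : Finset V) (hS : 2 ^ m ≤ S.card) :
    ∃ v : Fin (m + 1) → V, Function.Injective v ∧ (∀ i, v i ∈ S) ∧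
      ∀ i j : Fin (m + 1), i < j → T (v i) (v j) := by
  classical
  induction m generalizing S with
  | zero =>
    obtain ⟨x, hx⟩ := Finset.card_pos.mp (lt_of_lt_of_le one_pos hS)
    refine ⟨fun _ => x, ?_, fun _ => hx, ?_⟩
    · intro a b _
      have := a.isLt; have := b.isLt
      exact Fin.ext (by omega)
    · intro i j hij
      have := i.isLt; have := j.isLt
      rw [Fin.lt_def] at hij
      omega
  | succ m ih =>
    obtain ⟨x, hx⟩ := Finset.card_pos.mp (lt_of_lt_of_le (by positivity) hS)
    set A := (S.erase x).filter (fun y => T x y) with hA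
    set B := (S.erase x).filter (fun y => ¬ T x y) with hB
    have hAB : A.card + B.card = S.card - 1 := by
      rw [hA, hB, Finset.card_filter_add_card_filter_not,
        Finset.card_erase_of_mem hx]
    have hpow : 2 * 2 ^ m ≤ S.card := by rw [← pow_succ']; exact hS
    have hkey : 2 ^ m ≤ A.card ∨ 2 ^ m ≤ B.card := by omega
    rcases hkey with h | h
    · obtain ⟨w, hwinj, hwmem, hwch⟩ := ih A h
      have hxA : x ∉ A := fun hc => (Finset.mem_erase.mp (Finset.mem_filter.mp hc).1).1 rfl
      refine ⟨Fin.cons x w, ?_, ?_, ?_⟩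
      · intro a b hab
        rcases Fin.eq_zero_or_eq_succ a with rfl | ⟨a', rfl⟩ <;>
          rcases Fin.eq_zero_or_eq_succ b with rfl | ⟨b', rfl⟩
        · rfl
        · rw [Fin.cons_zero, Fin.cons_succ] at hab
          exact absurd (hab ▸ hwmem b') hxA
        · rw [Fin.cons_zero, Fin.cons_succ] at hab
          exact absurd (hab ▸ hwmem a') hxA
        · rw [Fin.cons_succ, Fin.cons_succ] at hab
          rw [hwinj hab]
      · intro i
        rcases Fin.eq_zero_or_eq_succ i with rfl | ⟨i', rfl⟩
        · simpa using hx
        · rw [Fin.cons_succ]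
          exact Finset.mem_of_mem_erase (Finset.mem_filter.mp (hwmem i')).1
      · intro i j hij
        rcases Fin.eq_zero_or_eq_succ i with rfl | ⟨i', rfl⟩ <;>
          rcases Fin.eq_zero_or_eq_succ j with rfl | ⟨j', rfl⟩
        · exact absurd hij (lt_irrefl _)
        · rw [Fin.cons_zero, Fin.cons_succ]
          exact (Finset.mem_filter.mp (hwmem j')).2
        · exact absurd hij (Fin.not_lt.mpr (Fin.zero_le _))
        · rw [Fin.cons_succ, Fin.cons_succ]
          exact hwch i' j' (Fin.succ_lt_succ_iff.mp hij)
    · obtain ⟨w, hwinj, hwmem, hwch⟩ := ih B h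
      have hxB : x ∉ B := fun hc => (Finset.mem_erase.mp (Finset.mem_filter.mp hc).1).1 rfl
      have hedge : ∀ i, T (w i) x := by
        intro i
        have hm := Finset.mem_filter.mp (hwmem i)
        exact (hT.2 (w i) x (Finset.mem_erase.mp hm.1).1).mpr hm.2
      refine ⟨Fin.snoc w x, ?_, ?_, ?_⟩
      · intro a b hab
        rcases Fin.eq_castSucc_or_eq_last a with ⟨a', rfl⟩ | rfl <;>
          rcases Fin.eq_castSucc_or_eq_last b with ⟨b', rfl⟩ | rfl
        · rw [Fin.snoc_castSucc, Fin.snoc_castSucc] at hab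
          rw [hwinj hab]
        · rw [Fin.snoc_castSucc, Fin.snoc_last] at hab
          exact absurd (hab ▸ hwmem a') hxB
        · rw [Fin.snoc_castSucc, Fin.snoc_last] at hab
          exact absurd (hab ▸ hwmem b') hxB
        · rfl
      · intro i
        rcases Fin.eq_castSucc_or_eq_last i with ⟨i', rfl⟩ | rfl
        · rw [Fin.snoc_castSucc]
          exact Finset.mem_of_mem_erase (Finset.mem_filter.mp (hwmem i')).1
        · simpa using hx
      · intro i j hij
        rcases Fin.eq_castSucc_or_eq_last i with ⟨i', rfl⟩ | rfl <;>
          rcases Fin.eq_castSucc_or_eq_last j with ⟨j', rfl⟩ | rfl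
        · rw [Fin.snoc_castSucc, Fin.snoc_castSucc]
          exact hwch i' j' (Fin.castSucc_lt_castSucc_iff.mp hij)
        · rw [Fin.snoc_castSucc, Fin.snoc_last]
          exact hedge i'
        · exact absurd hij (not_lt.mpr (Fin.castSucc_lt_last j').le)
        · exact absurd hij (lt_irrefl _)

theorem transitive_subtournament {m : ℕ}
    (T : Fin (2 ^ m) → Fin (2 ^ m) → Prop) (hT : IsTournament T) :
    ∃ v : Fin (m + 1) → Fin (2 ^ m), Function.Injective v ∧
      ∀ i j : Fin (m + 1), i < j → T (v i) (v j) := by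
  obtain ⟨v, hvinj, _, hvch⟩ := transitive_aux m T hT Finset.univ (by simp)
  exact ⟨v, hvinj, hvch⟩
end

section
/- For every k ≥ 5, there exists a tournament on 2^(k-1) vertices that contains no k-th power of a directed path on k(k+1)/2 vertices. Equivalently, ℓ_k(2^(k-1)) < k(k+1)/2. -/
/-- `pathPowerNum k n` is the largest `L` such that every `n`-vertex tournament
contains the k-th power of a directed path on `L` vertices. -/
noncomputable def pathPowerNum (k n : ℕ) : ℕ :=
  sSup {L | ∀ T : Fin n → Fin n → Prop, IsTournament T → ContainsPathPower T k L}

open Finset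

lemma ContainsPathPower.mono {V : Type*} {T : V → V → Prop} {k L L' : ℕ} (h : L' ≤ L)
    (hT : ContainsPathPower T k L) : ContainsPathPower T k L' := by
  obtain ⟨v, hv, hvT⟩ := hT
  exact ⟨v ∘ Fin.castLE h, hv.comp (Fin.castLE_injective h),
    fun i j hij hjk => hvT _ _ hij hjk⟩

lemma pathPowerNum_lt {k n L : ℕ} (hL : 0 < L) {T : Fin n → Fin n → Prop}
    (hT : IsTournament T) (hTL : ¬ ContainsPathPower T k L) : pathPowerNum k n < L := by
  have : pathPowerNum k n ≤ L - 1 := by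
    refine csSup_le ⟨0, fun T _ => ⟨Fin.elim0, fun a => a.elim0, fun i => i.elim0⟩⟩
      fun M hM => ?_
    by_contra! hLM
    exact hTL ((hM T hT).mono (by omega))
  omega

def pathPowerPairs (k L : ℕ) : Finset (Fin L × Fin L) :=
  {p | (p.1 : ℕ) < p.2 ∧ (p.2 : ℕ) ≤ p.1 + k}

lemma card_pathPowerPairs (k L : ℕ) :
    #(pathPowerPairs k L) = ∑ j ∈ range L, min j k := by
  rw [pathPowerPairs, card_filter, Fintype.sum_prod_type_right,
    ← Fin.sum_univ_eq_sum_range (fun j => min j k)]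
  refine sum_congr rfl fun j _ => ?_
  rw [Fin.sum_univ_eq_sum_range (fun i => if i < j ∧ (j : ℕ) ≤ i + k then 1 else 0),
    ← card_filter]
  calc #{i ∈ range L | i < (j : ℕ) ∧ (j : ℕ) ≤ i + k} = #(Ico ((j : ℕ) - k) j) := by
        congr 1
        ext i
        simp only [mem_filter, mem_range, mem_Ico]
        omega
    _ = min (j : ℕ) k := by rw [Nat.card_Ico]; omega

lemma two_mul_sum_range_min_add {k L : ℕ} (hkL : k ≤ L) :
    2 * ∑ j ∈ range L, min j k + k * (k + 1) = 2 * k * L := by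
  induction L, hkL using Nat.le_induction with
  | base =>
    have hgauss := sum_range_id_mul_two k
    rw [sum_congr rfl fun j hj => min_eq_left (mem_range.1 hj).le]
    rcases k with _ | k
    · simp
    · simp only [Nat.add_sub_cancel] at hgauss
      nlinarith
  | succ L hkL ih =>
    rw [sum_range_succ, min_eq_right hkL]
    linarith

lemma card_pathPowerPairs_triangular (k : ℕ) :
    #(pathPowerPairs k (k * (k + 1) / 2)) = (k - 1) * (k * (k + 1) / 2) := by
  set L := k * (k + 1) / 2
  have hL : 2 * L = k * (k + 1) := Nat.mul_div_cancel' (Nat.even_mul_succ_self k).two_dvd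
  have hkL : k ≤ L := by
    rcases k with _ | k
    · simp
    · nlinarith
  have := two_mul_sum_range_min_add hkL
  rw [← hL, mul_assoc] at this
  rw [card_pathPowerPairs, Nat.sub_one_mul]
  omega

lemma card_mul_pow_le_of_eqOn {α β : Type*} [Fintype α] [DecidableEq α] [Fintype β]
    (S : Finset α) (s : Finset (α → β)) (hs : ∀ f ∈ s, ∀ g ∈ s, ∀ a ∈ S, f a = g a) :
    #s * Fintype.card β ^ #S ≤ Fintype.card β ^ Fintype.card α := by
  have hrestrict : #s ≤ Fintype.card β ^ (Fintype.card α - #S) := by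
    have := card_le_card_of_injOn (fun (f : α → β) (a : (Sᶜ : Finset α)) => f a) (t := univ)
      (fun _ _ => mem_univ _) fun f hf g hg hfg => funext fun a => by
        by_cases ha : a ∈ S
        · exact hs f hf g hg a ha
        · exact congrFun hfg ⟨a, mem_compl.2 ha⟩
    simpa using this
  calc #s * Fintype.card β ^ #S
      ≤ Fintype.card β ^ (Fintype.card α - #S) * Fintype.card β ^ #S := by gcongr
    _ = Fintype.card β ^ Fintype.card α := by rw [← pow_add, Nat.sub_add_cancel (card_le_univ S)]

section Coloring

variable {V : Type*} [LinearOrder V]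

def tournamentOfColoring (f : Sym2 V → Bool) (u v : V) : Prop :=
  u ≠ v ∧ (f s(u, v) = true ↔ u < v)

instance (f : Sym2 V → Bool) : DecidableRel (tournamentOfColoring f) :=
  fun _ _ => inferInstanceAs (Decidable (_ ∧ _))

lemma isTournament_tournamentOfColoring (f : Sym2 V → Bool) :
    IsTournament (tournamentOfColoring f) := by
  refine ⟨fun v h => h.1 rfl, fun u v huv => ?_⟩
  rcases huv.lt_or_gt with h | h <;>
    simp [tournamentOfColoring, Sym2.eq_swap (a := v), huv, huv.symm, h, h.not_gt]

lemma eq_of_tournamentOfColoring {f g : Sym2 V → Bool} {u v : V}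
    (hf : tournamentOfColoring f u v) (hg : tournamentOfColoring g u v) :
    f s(u, v) = g s(u, v) :=
  Bool.eq_iff_iff.2 (hf.2.trans hg.2.symm)

def pathPowerEdges (k : ℕ) {L : ℕ} (e : Fin L ↪ V) : Finset (Sym2 V) :=
  (pathPowerPairs k L).image fun p => s(e p.1, e p.2)

lemma card_pathPowerEdges (k : ℕ) {L : ℕ} (e : Fin L ↪ V) :
    #(pathPowerEdges k e) = #(pathPowerPairs k L) := by
  refine card_image_of_injOn fun p hp q hq hpq => ?_
  simp only [mem_coe, pathPowerPairs, mem_filter, mem_univ, true_and] at hp hq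
  rcases Sym2.eq_iff.1 hpq with ⟨h1, h2⟩ | ⟨h1, h2⟩
  · exact Prod.ext (e.injective h1) (e.injective h2)
  · have := congrArg Fin.val (e.injective h1)
    have := congrArg Fin.val (e.injective h2)
    omega

variable [Fintype V]

lemma card_mul_pow_le_of_pathPower (k : ℕ) {L : ℕ} (e : Fin L ↪ V) :
    #{f : Sym2 V → Bool | ∀ i j : Fin L, (i : ℕ) < j → (j : ℕ) ≤ i + k →
        tournamentOfColoring f (e i) (e j)} * 2 ^ #(pathPowerPairs k L)
      ≤ 2 ^ Fintype.card (Sym2 V) := by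
  rw [← card_pathPowerEdges k e]
  refine card_mul_pow_le_of_eqOn _ _ fun f hf g hg a ha => ?_
  obtain ⟨⟨i, j⟩, hij, rfl⟩ := mem_image.1 ha
  simp only [pathPowerPairs, mem_filter, mem_univ, true_and] at hij
  simp only [mem_filter, mem_univ, true_and] at hf hg
  exact eq_of_tournamentOfColoring (hf i j hij.1 hij.2) (hg i j hij.1 hij.2)

theorem exists_tournament_not_containsPathPower {k L : ℕ}
    (h : (Fintype.card V).descFactorial L < 2 ^ #(pathPowerPairs k L)) :
    ∃ T : V → V → Prop, IsTournament T ∧ ¬ ContainsPathPower T k L := by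
  by_contra! hall
  let A : (Fin L ↪ V) → Finset (Sym2 V → Bool) := fun e =>
    {f | ∀ i j : Fin L, (i : ℕ) < j → (j : ℕ) ≤ i + k → tournamentOfColoring f (e i) (e j)}
  have hcover : (univ : Finset (Sym2 V → Bool)) ⊆ univ.biUnion A := fun f _ => by
    obtain ⟨v, hv, hvT⟩ := hall _ (isTournament_tournamentOfColoring f)
    exact mem_biUnion.2 ⟨⟨v, hv⟩, mem_univ _, mem_filter.2 ⟨mem_univ _, hvT⟩⟩
  have : 2 ^ Fintype.card (Sym2 V) * 2 ^ #(pathPowerPairs k L)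
      < 2 ^ #(pathPowerPairs k L) * 2 ^ Fintype.card (Sym2 V) :=
    calc 2 ^ Fintype.card (Sym2 V) * 2 ^ #(pathPowerPairs k L)
        ≤ #(univ.biUnion A) * 2 ^ #(pathPowerPairs k L) := by
          gcongr
          simpa using card_le_card hcover
      _ ≤ ∑ e, #(A e) * 2 ^ #(pathPowerPairs k L) := by
          rw [← sum_mul]; gcongr; exact card_biUnion_le
      _ ≤ ∑ _e : Fin L ↪ V, 2 ^ Fintype.card (Sym2 V) :=
          sum_le_sum fun e _ => card_mul_pow_le_of_pathPower k e
      _ = (Fintype.card V).descFactorial L * 2 ^ Fintype.card (Sym2 V) := by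
          rw [sum_const, card_univ, Fintype.card_embedding_eq, Fintype.card_fin, smul_eq_mul]
      _ < 2 ^ #(pathPowerPairs k L) * 2 ^ Fintype.card (Sym2 V) := by gcongr
  exact this.ne (mul_comm _ _)

end Coloring

theorem small_tournament_construction {k : ℕ} (hk : 5 ≤ k) :
    (∃ T : Fin (2 ^ (k - 1)) → Fin (2 ^ (k - 1)) → Prop,
      IsTournament T ∧ ¬ ContainsPathPower T k (k * (k + 1) / 2)) ∧
    pathPowerNum k (2 ^ (k - 1)) < k * (k + 1) / 2 := by
  have hL : 2 ≤ k * (k + 1) / 2 := (Nat.le_div_iff_mul_le two_pos).2 (by nlinarith)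
  have hfew : (Fintype.card (Fin (2 ^ (k - 1)))).descFactorial (k * (k + 1) / 2)
      < 2 ^ #(pathPowerPairs k (k * (k + 1) / 2)) := by
    rw [Fintype.card_fin, card_pathPowerPairs_triangular, pow_mul]
    exact Nat.descFactorial_lt_pow (by positivity) hL
  obtain ⟨T, hT, hTL⟩ := exists_tournament_not_containsPathPower hfew
  exact ⟨⟨T, hT, hTL⟩, pathPowerNum_lt (by omega) hT hTL⟩
end

section
/- Let x_1,...,x_n be a median ordering of a tournament and suppose x_i → x_{i-2} is an edge (for some 3 ≤ i ≤ n). Then the orderings obtained by cyclically rotating the consecutive triple x_{i-2}, x_{i-1}, x_i (i.e., x_1,...,x_{i-3}, x_{i-1}, x_i, x_{i-2}, x_{i+1},...,x_n and x_1,...,x_{i-3}, x_i, x_{i-2}, x_{i-1}, x_{i+1},...,x_n) are also median orderings. -/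
/-- Number of forward edges of the ordering `x 0, x 1, ..., x (n-1)`. -/
def fwdCount {n : ℕ} (T : Fin n → Fin n → Prop) [DecidableRel T]
    (x : Equiv.Perm (Fin n)) : ℕ :=
  (Finset.univ.filter fun p : Fin n × Fin n => p.1 < p.2 ∧ T (x p.1) (x p.2)).card

/-- A median ordering maximizes the number of forward edges. -/
def IsMedianOrdering {n : ℕ} (T : Fin n → Fin n → Prop) [DecidableRel T]
    (x : Equiv.Perm (Fin n)) : Prop :=
  ∀ y : Equiv.Perm (Fin n), fwdCount T y ≤ fwdCount T x

/-
Swapping two adjacent positions `i, i + 1` of an ordering changes only the status of the edge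
between the two swapped vertices, so it changes the number of forward edges by at most one.
Let `u, v, w` be the vertices at positions `a, a + 1, a + 2`, with `w → u`. Each rotation is two
adjacent swaps: the first loses at most one forward edge, and the second makes the backward edge
`w → u` forward, gaining one. Hence neither rotation decreases the number of forward edges.
-/

open Equiv Finset

theorem IsTournament.asymm {V : Type*} {T : V → V → Prop} (hT : IsTournament T) {u v : V}
    (h : T u v) : ¬ T v u := by
  by_cases huv : u = v
  · subst huv
    exact absurd h (hT.1 u)
  · exact (hT.2 u v huv).mp h

theorem IsMedianOrdering.of_fwdCount_le {n : ℕ} {T : Fin n → Fin n → Prop} [DecidableRel T]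
    {x y : Perm (Fin n)} (hx : IsMedianOrdering T x) (hxy : fwdCount T x ≤ fwdCount T y) :
    IsMedianOrdering T y :=
  fun z => (hx z).trans hxy

namespace Fin

variable {n : ℕ} {i j : Fin n}

theorem swap_apply_lt_swap_apply_iff (hij : (i : ℕ) + 1 = j) {p q : Fin n}
    (hpq : ¬ (p = i ∧ q = j)) (hqp : ¬ (p = j ∧ q = i)) :
    swap i j p < swap i j q ↔ p < q := by
  simp only [swap_apply_def, Fin.ext_iff, Fin.lt_def] at hpq hqp ⊢
  split_ifs <;> omega

end Fin

section AdjacentSwap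

variable {n : ℕ} (T : Fin n → Fin n → Prop) [DecidableRel T] (x : Perm (Fin n)) {i j : Fin n}

theorem fwdCount_swap_add_ite (hij : (i : ℕ) + 1 = j) :
    fwdCount T ((swap i j).trans x) + (if T (x i) (x j) then 1 else 0) =
      fwdCount T x + (if T (x j) (x i) then 1 else 0) := by
  have hlt : i < j := by rw [Fin.lt_def]; omega
  have reindex : fwdCount T ((swap i j).trans x) =
      ∑ p : Fin n × Fin n, if swap i j p.1 < swap i j p.2 ∧ T (x p.1) (x p.2) then 1 else 0 := by
    rw [fwdCount, card_filter]
    refine Fintype.sum_equiv ((swap i j).prodCongr (swap i j)) _ _ fun p => ?_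
    simp only [prodCongr_apply, Prod.map_fst, Prod.map_snd, swap_apply_self, trans_apply]
    rfl
  -- Only the pairs `(i, j)` and `(j, i)` change their order under the swap.
  have termwise : ∀ p : Fin n × Fin n,
      (if swap i j p.1 < swap i j p.2 ∧ T (x p.1) (x p.2) then 1 else 0) +
          (if p = (i, j) then (if T (x i) (x j) then 1 else 0) else 0) =
        (if p.1 < p.2 ∧ T (x p.1) (x p.2) then 1 else 0) +
          (if p = (j, i) then (if T (x j) (x i) then 1 else 0) else 0) := by
    rintro ⟨p, q⟩
    by_cases hpq : p = i ∧ q = j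
    · obtain ⟨rfl, rfl⟩ := hpq
      simp [hlt, hlt.ne, hlt.not_gt]
    by_cases hqp : p = j ∧ q = i
    · obtain ⟨rfl, rfl⟩ := hqp
      simp [hlt, hlt.ne', hlt.not_gt]
    · simp only [Prod.mk.injEq, hpq, hqp, if_false, add_zero,
        Fin.swap_apply_lt_swap_apply_iff hij hpq hqp]
  rw [reindex, fwdCount, card_filter,
    ← Fintype.sum_ite_eq' (i, j) fun _ => if T (x i) (x j) then 1 else 0,
    ← Fintype.sum_ite_eq' (j, i) fun _ => if T (x j) (x i) then 1 else 0,
    ← sum_add_distrib, ← sum_add_distrib]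
  exact Fintype.sum_congr _ _ termwise

theorem fwdCount_le_fwdCount_swap_add_one (hij : (i : ℕ) + 1 = j) :
    fwdCount T x ≤ fwdCount T ((swap i j).trans x) + 1 := by
  have h := fwdCount_swap_add_ite T x hij
  split_ifs at h <;> omega

theorem fwdCount_swap_eq_add_one (hij : (i : ℕ) + 1 = j) (hback : T (x j) (x i))
    (hnot : ¬ T (x i) (x j)) :
    fwdCount T ((swap i j).trans x) = fwdCount T x + 1 := by
  simpa [hback, hnot] using fwdCount_swap_add_ite T x hij

end AdjacentSwap

theorem median_rotation {n : ℕ} (T : Fin n → Fin n → Prop) [DecidableRel T]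
    (hT : IsTournament T) (x : Equiv.Perm (Fin n)) (hx : IsMedianOrdering T x)
    (a : ℕ) (ha : a + 2 < n)
    (hedge : T (x ⟨a + 2, ha⟩) (x ⟨a, by omega⟩)) :
    IsMedianOrdering T (((Equiv.swap (⟨a + 1, by omega⟩ : Fin n) ⟨a + 2, ha⟩).trans
        (Equiv.swap (⟨a, by omega⟩ : Fin n) ⟨a + 1, by omega⟩)).trans x) ∧
    IsMedianOrdering T (((Equiv.swap (⟨a, by omega⟩ : Fin n) ⟨a + 1, by omega⟩).trans
        (Equiv.swap (⟨a + 1, by omega⟩ : Fin n) ⟨a + 2, ha⟩)).trans x) := by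
  set A : Fin n := ⟨a, by omega⟩
  set B : Fin n := ⟨a + 1, by omega⟩
  set C : Fin n := ⟨a + 2, ha⟩
  have hCA : C ≠ A := by simp [A, C, Fin.ext_iff]
  have hCB : C ≠ B := by simp [B, C, Fin.ext_iff]
  have hAB : A ≠ B := by simp [A, B, Fin.ext_iff]
  have hnot := hT.asymm hedge
  constructor
  · refine hx.of_fwdCount_le ?_
    rw [trans_assoc]
    have hfirst := fwdCount_le_fwdCount_swap_add_one T x (i := A) (j := B) rfl
    have hsecond := fwdCount_swap_eq_add_one T ((swap A B).trans x) (i := B) (j := C) rfl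
      (by simpa [swap_apply_of_ne_of_ne hCA hCB] using hedge)
      (by simpa [swap_apply_of_ne_of_ne hCA hCB] using hnot)
    omega
  · refine hx.of_fwdCount_le ?_
    rw [trans_assoc]
    have hfirst := fwdCount_le_fwdCount_swap_add_one T x (i := B) (j := C) rfl
    have hsecond := fwdCount_swap_eq_add_one T ((swap B C).trans x) (i := A) (j := B) rfl
      (by simpa [swap_apply_of_ne_of_ne hAB hCA.symm] using hedge)
      (by simpa [swap_apply_of_ne_of_ne hAB hCA.symm] using hnot)
    omega
end

section
/- Let x_1,...,x_n be a median ordering of a tournament and suppose x_i → x_{i-2} is an edge, with 3 ≤ i ≤ n-2. Then each of x_{i-2}, x_{i-1}, x_i is an inneighbour of x_{i+1}, and at most one of x_{i-2}, x_{i-1}, x_i is an outneighbour of x_{i+2}. -/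
/-
Swapping two adjacent vertices of an ordering changes the number of forward edges by exactly
one, so in a median ordering every edge between consecutive vertices points forward. Hence
`x_{i-2} → x_{i-1} → x_i → x_{i-2}` is a cyclic triangle, and moving `x_i` two places to the
left loses one forward edge and gains one: the rotations of the triangle are median orderings
too. Across these three orderings each of `x_{i-2}, x_{i-1}, x_i` sits directly before
`x_{i+1}`, and each pair of them sits directly before `x_{i+1} x_{i+2}`; if `x_{i+2}` beat
both vertices of such a pair, moving it three places to the left would gain a forward edge.
-/

open Equiv Finset

variable {n : ℕ} {T : Fin n → Fin n → Prop} [DecidableRel T] {x : Perm (Fin n)} {i j : Fin n}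

theorem swap_lt_swap_iff_of_adjacent (hij : (j : ℕ) = i + 1) {p q : Fin n}
    (hpq : (p, q) ≠ (i, j)) (hqp : (p, q) ≠ (j, i)) : swap i j p < swap i j q ↔ p < q := by
  simp only [ne_eq, Prod.ext_iff, not_and_or] at hpq hqp
  rw [swap_apply_def, swap_apply_def]
  split_ifs <;> simp only [Fin.ext_iff, Fin.lt_def] at * <;> omega

theorem fwdCount_swap_add (x : Perm (Fin n)) (hij : (j : ℕ) = i + 1) :
    fwdCount T ((swap i j).trans x) + (if T (x i) (x j) then 1 else 0) =
      fwdCount T x + (if T (x j) (x i) then 1 else 0) := by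
  have hlt : i < j := by simp [Fin.lt_def, hij]
  set A := univ.filter fun p : Fin n × Fin n =>
    p.1 < p.2 ∧ T (x (swap i j p.1)) (x (swap i j p.2))
  set B := univ.filter fun p : Fin n × Fin n => p.1 < p.2 ∧ T (x p.1) (x p.2)
  have hA : (i, j) ∈ A ↔ T (x j) (x i) := by simp [A, hlt]
  have hB : (i, j) ∈ B ↔ T (x i) (x j) := by simp [B, hlt]
  have herase : #(A.erase (i, j)) = #(B.erase (i, j)) := by
    refine card_equiv ((swap i j).prodCongr (swap i j)) fun p => ?_
    by_cases hp : p = (i, j)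
    · subst hp; simp [A, B, hlt.not_gt]
    by_cases hp' : p = (j, i)
    · subst hp'; simp [A, B, hlt.not_gt]
    simp only [mem_erase, mem_filter, mem_univ, true_and, prodCongr_apply, Prod.map, A, B]
    have hsp : (swap i j p.1, swap i j p.2) ≠ (i, j) := fun h => hp' <| by
      simp only [Prod.ext_iff, swap_apply_eq_iff, swap_apply_left, swap_apply_right] at h
      exact Prod.ext h.1 h.2
    rw [swap_lt_swap_iff_of_adjacent hij hp hp']
    simp only [ne_eq, hp, hsp, not_false_eq_true, true_and]
  have hcard (s : Finset (Fin n × Fin n)) :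
      #s = #(s.erase (i, j)) + if (i, j) ∈ s then 1 else 0 := by
    split_ifs with h
    · exact (card_erase_add_one h).symm
    · rw [erase_eq_of_notMem h, add_zero]
  change #A + _ = #B + _
  rw [hcard A, hcard B, herase]
  simp only [hA, hB]
  omega

theorem IsTournament.fwdCount_swap_of_forward (hT : IsTournament T) (hij : (j : ℕ) = i + 1)
    (h : T (x i) (x j)) : fwdCount T ((swap i j).trans x) + 1 = fwdCount T x := by
  have hne : x i ≠ x j := fun he => hT.1 _ (he ▸ h)
  simpa [h, (hT.2 _ _ hne).1 h] using fwdCount_swap_add (T := T) x hij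

theorem IsTournament.fwdCount_swap_of_backward (hT : IsTournament T) (hij : (j : ℕ) = i + 1)
    (h : T (x j) (x i)) : fwdCount T ((swap i j).trans x) = fwdCount T x + 1 := by
  have hne : x j ≠ x i := fun he => hT.1 _ (he ▸ h)
  simpa [h, (hT.2 _ _ hne).1 h] using fwdCount_swap_add (T := T) x hij

namespace IsMedianOrdering

variable {k l : Fin n}

theorem forward_of_adjacent (hT : IsTournament T) (hx : IsMedianOrdering T x)
    (hij : (j : ℕ) = i + 1) : T (x i) (x j) := by
  have hne : x i ≠ x j := x.injective.ne (Fin.ne_of_val_ne (by omega))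
  by_contra h
  have := hT.fwdCount_swap_of_backward hij ((hT.2 _ _ hne.symm).2 h)
  have := hx ((swap i j).trans x)
  omega

theorem exists_rotate (hT : IsTournament T) (hx : IsMedianOrdering T x)
    (hij : (j : ℕ) = i + 1) (hjk : (k : ℕ) = j + 1) (hki : T (x k) (x i)) :
    ∃ y, IsMedianOrdering T y ∧ y i = x k ∧ y j = x i ∧ y k = x j ∧
      ∀ p, p ≠ i → p ≠ j → p ≠ k → y p = x p := by
  have hij' : i ≠ j := Fin.ne_of_val_ne (by omega)
  have hjk' : j ≠ k := Fin.ne_of_val_ne (by omega)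
  have hik' : i ≠ k := Fin.ne_of_val_ne (by omega)
  set y₁ := (swap j k).trans x
  have h₁ : fwdCount T y₁ + 1 = fwdCount T x :=
    hT.fwdCount_swap_of_forward hjk (hx.forward_of_adjacent hT hjk)
  have h₂ : fwdCount T ((swap i j).trans y₁) = fwdCount T y₁ + 1 :=
    hT.fwdCount_swap_of_backward hij (by simpa [y₁, swap_apply_of_ne_of_ne hij' hik'] using hki)
  refine ⟨(swap i j).trans y₁, fun z => (hx z).trans (by omega), ?_, ?_, ?_,
    fun p hpi hpj hpk => ?_⟩
  · simp [y₁]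
  · simp [y₁, swap_apply_of_ne_of_ne hij' hik']
  · simp [y₁, swap_apply_of_ne_of_ne hik'.symm hjk'.symm]
  · simp [y₁, swap_apply_of_ne_of_ne hpi hpj, swap_apply_of_ne_of_ne hpj hpk]

theorem not_backward_two_and_three (hT : IsTournament T) (hx : IsMedianOrdering T x)
    (hij : (j : ℕ) = i + 1) (hjk : (k : ℕ) = j + 1) (hkl : (l : ℕ) = k + 1) :
    ¬ (T (x l) (x i) ∧ T (x l) (x j)) := by
  rintro ⟨hli, hlj⟩
  have hij' : i ≠ j := Fin.ne_of_val_ne (by omega)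
  have hjk' : j ≠ k := Fin.ne_of_val_ne (by omega)
  have hik' : i ≠ k := Fin.ne_of_val_ne (by omega)
  have hil' : i ≠ l := Fin.ne_of_val_ne (by omega)
  have hjl' : j ≠ l := Fin.ne_of_val_ne (by omega)
  set y₁ := (swap k l).trans x
  set y₂ := (swap j k).trans y₁
  have h₁ : fwdCount T y₁ + 1 = fwdCount T x :=
    hT.fwdCount_swap_of_forward hkl (hx.forward_of_adjacent hT hkl)
  have h₂ : fwdCount T y₂ = fwdCount T y₁ + 1 :=
    hT.fwdCount_swap_of_backward hjk (by simpa [y₁, swap_apply_of_ne_of_ne hjk' hjl'] using hlj)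
  have h₃ : fwdCount T ((swap i j).trans y₂) = fwdCount T y₂ + 1 :=
    hT.fwdCount_swap_of_backward hij
      (by simpa [y₁, y₂, swap_apply_of_ne_of_ne hij' hik', swap_apply_of_ne_of_ne hik' hil']
        using hli)
  have := hx ((swap i j).trans y₂)
  omega

end IsMedianOrdering

theorem median_triple {n : ℕ} (T : Fin n → Fin n → Prop) [DecidableRel T]
    (hT : IsTournament T) (x : Equiv.Perm (Fin n)) (hx : IsMedianOrdering T x)
    (a : ℕ) (ha : a + 4 < n)
    (hedge : T (x ⟨a + 2, by omega⟩) (x ⟨a, by omega⟩)) :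
    (T (x ⟨a, by omega⟩) (x ⟨a + 3, by omega⟩) ∧
     T (x ⟨a + 1, by omega⟩) (x ⟨a + 3, by omega⟩) ∧
     T (x ⟨a + 2, by omega⟩) (x ⟨a + 3, by omega⟩)) ∧
    (¬ (T (x ⟨a + 4, ha⟩) (x ⟨a, by omega⟩) ∧ T (x ⟨a + 4, ha⟩) (x ⟨a + 1, by omega⟩)) ∧
     ¬ (T (x ⟨a + 4, ha⟩) (x ⟨a, by omega⟩) ∧ T (x ⟨a + 4, ha⟩) (x ⟨a + 2, by omega⟩)) ∧
     ¬ (T (x ⟨a + 4, ha⟩) (x ⟨a + 1, by omega⟩) ∧ T (x ⟨a + 4, ha⟩) (x ⟨a + 2, by omega⟩))) := by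
  set p₀ : Fin n := ⟨a, by omega⟩
  set p₁ : Fin n := ⟨a + 1, by omega⟩
  set p₂ : Fin n := ⟨a + 2, by omega⟩
  set p₃ : Fin n := ⟨a + 3, by omega⟩
  set p₄ : Fin n := ⟨a + 4, ha⟩
  have hfixed {y z : Perm (Fin n)} (h : ∀ p, p ≠ p₀ → p ≠ p₁ → p ≠ p₂ → y p = z p) (p : Fin n)
      (hp : a + 3 ≤ p) : y p = z p :=
    h p (Fin.ne_of_val_ne (by simp [p₀]; omega)) (Fin.ne_of_val_ne (by simp [p₁]; omega))
      (Fin.ne_of_val_ne (by simp [p₂]; omega))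
  obtain ⟨r₁, hr₁, h₁₀, h₁₁, h₁₂, h₁⟩ :=
    hx.exists_rotate hT (i := p₀) (j := p₁) (k := p₂) rfl rfl hedge
  obtain ⟨r₂, hr₂, -, h₂₁, h₂₂, h₂⟩ := hr₁.exists_rotate hT (i := p₀) (j := p₁) (k := p₂) rfl rfl
    (by rw [h₁₂, h₁₀]; exact hx.forward_of_adjacent hT rfl)
  have h₁₃ : r₁ p₃ = x p₃ := hfixed h₁ p₃ le_rfl
  have h₁₄ : r₁ p₄ = x p₄ := hfixed h₁ p₄ (by simp [p₄])
  have h₂₃ : r₂ p₃ = x p₃ := (hfixed h₂ p₃ le_rfl).trans h₁₃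
  have h₂₄ : r₂ p₄ = x p₄ := (hfixed h₂ p₄ (by simp [p₄])).trans h₁₄
  refine ⟨⟨?_, ?_, ?_⟩, ?_, ?_, ?_⟩
  · simpa [h₂₂, h₁₁, h₂₃] using hr₂.forward_of_adjacent hT (i := p₂) (j := p₃) rfl
  · simpa [h₁₂, h₁₃] using hr₁.forward_of_adjacent hT (i := p₂) (j := p₃) rfl
  · exact hx.forward_of_adjacent hT rfl
  · simpa [h₁₁, h₁₂, h₁₄] using
      hr₁.not_backward_two_and_three hT (i := p₁) (j := p₂) (k := p₃) (l := p₄) rfl rfl rfl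
  · simpa [h₂₁, h₂₂, h₁₀, h₁₁, h₂₄, and_comm] using
      hr₂.not_backward_two_and_three hT (i := p₁) (j := p₂) (k := p₃) (l := p₄) rfl rfl rfl
  · exact hx.not_backward_two_and_three hT (i := p₁) (j := p₂) (k := p₃) (l := p₄) rfl rfl rfl
end

section
/- For every n ≥ 1, there exists a tournament on n vertices that contains no square of a directed path on ⌈2n/3⌉ + 1 vertices. -/
theorem square_path_upper {n : ℕ} (hn : 1 ≤ n) :
    ∃ T : Fin n → Fin n → Prop, IsTournament T ∧
      ¬ ContainsPathPower T 2 ((2 * n + 2) / 3 + 1) := by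
  set L : ℕ := (2 * n + 2) / 3 + 1 with hLdef
  refine ⟨fun u w => (u : ℕ) / 3 < (w : ℕ) / 3 ∨
      ((u : ℕ) / 3 = (w : ℕ) / 3 ∧ (w : ℕ) % 3 = ((u : ℕ) % 3 + 1) % 3), ?_, ?_⟩
  · constructor
    · intro u; simp only; omega
    · intro u w huw
      have h : (u : ℕ) ≠ (w : ℕ) := fun h => huw (Fin.ext h)
      simp only; omega
  · rintro ⟨v, hinj, hedge⟩
    -- consecutive edges give non-decreasing blocks
    have step1 : ∀ a : ℕ, ∀ h : a + 1 < L,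
        (v ⟨a, by omega⟩ : ℕ) / 3 ≤ (v ⟨a + 1, h⟩ : ℕ) / 3 := by
      intro a h
      have := hedge ⟨a, by omega⟩ ⟨a + 1, h⟩ (by simp) (by simp)
      omega
    -- within two steps the block strictly increases
    have step2 : ∀ a : ℕ, ∀ h : a + 2 < L,
        (v ⟨a, by omega⟩ : ℕ) / 3 < (v ⟨a + 2, h⟩ : ℕ) / 3 := by
      intro a h
      have e01 := hedge ⟨a, by omega⟩ ⟨a + 1, by omega⟩ (by simp) (by simp)
      have e12 := hedge ⟨a + 1, by omega⟩ ⟨a + 2, h⟩ (by simp) (by simp)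
      have e02 := hedge ⟨a, by omega⟩ ⟨a + 2, h⟩ (by simp) (by simp)
      omega
    have grow : ∀ t : ℕ, ∀ h : 2 * t < L, t ≤ (v ⟨2 * t, h⟩ : ℕ) / 3 := by
      intro t
      induction t with
      | zero => intro h; exact Nat.zero_le _
      | succ t ih =>
          intro h
          have h' : 2 * t < L := by omega
          have h2 : 2 * t + 2 < L := by omega
          have := step2 (2 * t) h2
          have := ih h'
          have : t + 1 ≤ (v ⟨2 * t + 2, h2⟩ : ℕ) / 3 := by omega
          have heq : (⟨2 * t + 2, h2⟩ : Fin L) = ⟨2 * (t + 1), h⟩ := by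
            apply Fin.ext; simp; omega
          rwa [heq] at this
    set k : ℕ := (2 * n + 2) / 3 with hk
    have hkL : k + 1 = L := rfl
    rcases Nat.even_or_odd k with ⟨t, ht⟩ | ⟨t, ht⟩
    · -- k = 2t, last vertex v_k has block ≥ t, but v_k < n ≤ 3t
      have h2t : 2 * t < L := by omega
      have hg := grow t h2t
      have hlt : (v ⟨2 * t, h2t⟩ : ℕ) < n := (v ⟨2 * t, h2t⟩).isLt
      omega
    · -- k = 2t+1, so n = 3t+1; v_{2t} and v_{2t+1} both forced to be 3t
      have hn3 : n = 3 * t + 1 := by omega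
      have h2t : 2 * t < L := by omega
      have h2t1 : 2 * t + 1 < L := by omega
      have hg := grow t h2t
      have hs := step1 (2 * t) h2t1
      have hlt1 : (v ⟨2 * t, h2t⟩ : ℕ) < n := (v ⟨2 * t, h2t⟩).isLt
      have hlt2 : (v ⟨2 * t + 1, h2t1⟩ : ℕ) < n := (v ⟨2 * t + 1, h2t1⟩).isLt
      have hveq : v ⟨2 * t, h2t⟩ = v ⟨2 * t + 1, h2t1⟩ := by
        apply Fin.ext; omega
      have := hinj hveq
      have : (2 * t : ℕ) = 2 * t + 1 := congrArg Fin.val this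
      omega
end

section
/- For every n ≥ 1, ℓ_2(n) ≤ ⌈2n/3⌉, i.e., there exists an n-vertex tournament containing no square of a directed path on ⌈2n/3⌉ + 1 vertices; this follows by induction from ℓ_2(1) = 1, ℓ_2(2) = ℓ_2(3) = 2, and the subadditivity ℓ_2(n) ≤ ℓ_2(n-3) + 2 for n > 3. -/
lemma ell_two_key (n : ℕ) (hn : 1 ≤ n) :
    ∃ T : Fin n → Fin n → Prop, IsTournament T ∧
      ∀ L, ContainsPathPower T 2 L → L ≤ (2 * n + 2) / 3 := by
  refine ⟨fun u w => (u : ℕ) / 3 < (w : ℕ) / 3 ∨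
      ((u : ℕ) / 3 = (w : ℕ) / 3 ∧ (w : ℕ) % 3 = ((u : ℕ) % 3 + 1) % 3), ⟨?_, ?_⟩, ?_⟩
  · intro v; simp only; omega
  · intro u w huw
    have h : (u : ℕ) ≠ (w : ℕ) := fun hh => huw (Fin.val_injective hh)
    simp only; omega
  · rintro L ⟨v, hinj, hpath⟩
    -- any edge is block-nondecreasing; within a block the 3-cycle has no transitive triangle
    have jump : ∀ s t (hs : s < L) (ht : t < L), s + 2 = t →
        (v ⟨s, hs⟩ : ℕ) / 3 + 1 ≤ (v ⟨t, ht⟩ : ℕ) / 3 := by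
      intro s t hs ht hst
      subst hst
      have h1 : s < L := hs
      have hmid : s + 1 < L := by omega
      have e1 := hpath ⟨s, hs⟩ ⟨s + 1, hmid⟩ (by show s < s + 1; omega)
        (by show s + 1 ≤ s + 2; omega)
      have e2 := hpath ⟨s + 1, hmid⟩ ⟨s + 2, ht⟩ (by show s + 1 < s + 2; omega)
        (by show s + 2 ≤ s + 1 + 2; omega)
      have e3 := hpath ⟨s, hs⟩ ⟨s + 2, ht⟩ (by show s < s + 2; omega)
        (by show s + 2 ≤ s + 2; omega)
      simp only at e1 e2 e3
      omega
    have low : ∀ s (h : 2 * s < L), s ≤ (v ⟨2 * s, h⟩ : ℕ) / 3 := by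
      intro s
      induction s with
      | zero => intro h; exact Nat.zero_le _
      | succ s ih =>
        intro h
        have h2 : 2 * s < L := by omega
        have hj := jump (2 * s) (2 * (s + 1)) h2 h (by ring)
        have := ih h2
        omega
    by_contra hL
    push_neg at hL
    obtain ⟨q, r, hr, hnqr⟩ : ∃ q r, r < 3 ∧ n = 3 * q + r :=
      ⟨n / 3, n % 3, Nat.mod_lt _ (by norm_num), by omega⟩
    interval_cases r
    · -- n = 3q, q ≥ 1, L ≥ 2q+1
      have hq1 : 1 ≤ q := by omega
      have hM : (2 * n + 2) / 3 = 2 * q := by omega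
      have hidx : 2 * q < L := by omega
      have h1 := low q hidx
      have h2 := (v ⟨2 * q, hidx⟩).isLt
      omega
    · -- n = 3q+1, L ≥ 2q+2
      have hM : (2 * n + 2) / 3 = 2 * q + 1 := by omega
      have hidx : 2 * q < L := by omega
      have hidx2 : 2 * q + 1 < L := by omega
      have h1 := low q hidx
      have e := hpath ⟨2 * q, hidx⟩ ⟨2 * q + 1, hidx2⟩ (by show 2 * q < 2 * q + 1; omega)
        (by show 2 * q + 1 ≤ 2 * q + 2; omega)
      simp only at e
      have hb1 := (v ⟨2 * q, hidx⟩).isLt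
      have hb2 := (v ⟨2 * q + 1, hidx2⟩).isLt
      have hv : ((v ⟨2 * q, hidx⟩ : Fin n) : ℕ) = ((v ⟨2 * q + 1, hidx2⟩ : Fin n) : ℕ) := by
        omega
      have := hinj (Fin.val_injective hv)
      simp only [Fin.mk.injEq] at this
      omega
    · -- n = 3q+2, L ≥ 2q+3
      have hM : (2 * n + 2) / 3 = 2 * q + 2 := by omega
      have hidx : 2 * (q + 1) < L := by omega
      have h1 := low (q + 1) hidx
      have h2 := (v ⟨2 * (q + 1), hidx⟩).isLt
      omega

theorem ell_two_upper (n : ℕ) (hn : 1 ≤ n) :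
    pathPowerNum 2 n ≤ (2 * n + 2) / 3 ∧
    ∃ T : Fin n → Fin n → Prop, IsTournament T ∧
      ¬ ContainsPathPower T 2 ((2 * n + 2) / 3 + 1) := by
  obtain ⟨T, hT, hL⟩ := ell_two_key n hn
  constructor
  · apply csSup_le'
    intro L hLS
    exact hL L (hLS T hT)
  · exact ⟨T, hT, fun h => by have := hL _ h; omega⟩
end
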